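/- arXiv:1011.0246 — 5 statements merged into one kernel-verified Lean document; each statement's English description precedes it below -/
import Mathlib

section
/- Let n ≥ 1 and let C be a real 2×n matrix with |C_{ki}| ≤ 1 for all k ∈ {1,2} and i = 1, …, n. There exist a real number x and a real symmetric n×n matrix B with unit diagonal such that the (n+2)×(n+2) block matrix Γ = [[A, C],[Cᵀ, B]], with A = [[1, x],[x, 1]], is positive semidefinite, if and only if for all i, j ∈ {1, …, n}, each of the four inequalities obtained by placing a single minus sign on one of the four terms holds: |arcsin(C_{1i}) + arcsin(C_{2i}) + arcsin(C_{1j}) − arcsin(C_{2j})| ≤ π, |arcsin(C_{1i}) + arcsin(C_{2i}) − arcsin(C_{1j}) + arcsin(C_{2j})| ≤ π, |arcsin(C_{1i}) − arcsin(C_{2i}) + arcsin(C_{1j}) + arcsin(C_{2j})| ≤ π, and |−arcsin(C_{1i}) + arcsin(C_{2i}) + arcsin(C_{1j}) + arcsin(C_{2j})| ≤ π. -/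
/-!
Write `C 0 k = cos αₖ`, `C 1 k = cos βₖ` and `x = cos θ` with all angles in `[0, π]`. The principal
minor of `Γ` on the rows of `x` and of column `k` is
`(cos θ - cos (αₖ + βₖ)) * (cos (αₖ - βₖ) - cos θ)`, so it is nonnegative exactly when `θ` lies in
the window `[|αₖ - βₖ|, min (αₖ + βₖ) (2π - (αₖ + βₖ))]` (the triangle inequalities of a spherical
triangle). Conversely, if all these minors are nonnegative, `Γ` can be realised as a Gram matrix:
factor `A = Lᵀ L`, solve `Lᵀ wₖ = (C 0 k, C 1 k)` with `‖wₖ‖ ≤ 1`, and take `B = Wᵀ W` plus the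
diagonal correction `1 - ‖wₖ‖²`. Hence `Γ` is completable iff the windows have a common point,
which for intervals means that any two of them meet; with `arcsin = π/2 - arccos`, the four
inequalities for `i, j` say exactly that windows `i` and `j` meet.
-/

open Matrix Real Set

namespace Matrix

variable {R : Type*} [CommRing R] [PartialOrder R] [StarRing R] [StarOrderedRing R]
  {k m n : Type*} [Fintype k] [Fintype m] [Fintype n] [DecidableEq m] [DecidableEq n]

theorem posSemidef_fromBlocks_gram_add_diagonal (L : Matrix k m R) (W : Matrix k n R)
    {d : n → R} (hd : 0 ≤ d) :
    (fromBlocks (Lᴴ * L) (Lᴴ * W) (Wᴴ * L) (Wᴴ * W + diagonal d)).PosSemidef := by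
  have h : fromBlocks (Lᴴ * L) (Lᴴ * W) (Wᴴ * L) (Wᴴ * W + diagonal d) =
      (fromCols L W)ᴴ * fromCols L W + diagonal (Sum.elim 0 d) := by
    rw [conjTranspose_fromCols_eq_fromRows_conjTranspose, fromRows_mul_fromCols,
      ← fromBlocks_diagonal, fromBlocks_add]
    simp
  rw [h]
  exact (posSemidef_conjTranspose_mul_self _).add (.diagonal (Sum.rec (fun _ => le_rfl) hd))

end Matrix

/-- The determinant of the correlation matrix `!![1, c, a; c, 1, b; a, b, 1]`. -/
def corrDet (a b c : ℝ) : ℝ := 1 + 2 * a * b * c - a ^ 2 - b ^ 2 - c ^ 2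

theorem corrDet_cos_cos (α β c : ℝ) :
    corrDet (cos α) (cos β) c = (c - cos (α + β)) * (cos (α - β) - c) := by
  rw [corrDet, cos_add, cos_sub]
  linear_combination (cos α ^ 2 - 1) * sin_sq_add_cos_sq β - sin β ^ 2 * sin_sq_add_cos_sq α

theorem cos_add_le_cos_sub {α β : ℝ} (hα : α ∈ Icc 0 π) (hβ : β ∈ Icc 0 π) :
    cos (α + β) ≤ cos (α - β) := by
  rw [cos_add, cos_sub]
  nlinarith [mul_nonneg (sin_nonneg_of_mem_Icc hα) (sin_nonneg_of_mem_Icc hβ)]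

theorem cos_le_cos_iff_abs_le {t θ : ℝ} (ht : |t| ≤ π) (hθ : θ ∈ Icc 0 π) :
    cos θ ≤ cos t ↔ |t| ≤ θ := by
  rw [← cos_abs t]
  exact strictAntiOn_cos.le_iff_ge hθ ⟨abs_nonneg t, ht⟩

theorem cos_le_cos_iff_le_min {s θ : ℝ} (hs : s ∈ Icc 0 (2 * π)) (hθ : θ ∈ Icc 0 π) :
    cos s ≤ cos θ ↔ θ ≤ min s (2 * π - s) := by
  rcases le_total s π with hsπ | hπs
  · rw [strictAntiOn_cos.le_iff_ge ⟨hs.1, hsπ⟩ hθ, min_eq_left (by linarith)]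
  · rw [← cos_two_pi_sub s, strictAntiOn_cos.le_iff_ge ⟨by linarith [hs.2], by linarith⟩ hθ,
      min_eq_right (by linarith)]

theorem corrDet_cos_nonneg_iff {α β θ : ℝ} (hα : α ∈ Icc 0 π) (hβ : β ∈ Icc 0 π)
    (hθ : θ ∈ Icc 0 π) :
    0 ≤ corrDet (cos α) (cos β) (cos θ) ↔ θ ∈ Icc |α - β| (min (α + β) (2 * π - (α + β))) := by
  have hle := cos_add_le_cos_sub hα hβ
  have hprod : 0 ≤ (cos θ - cos (α + β)) * (cos (α - β) - cos θ) ↔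
      cos (α + β) ≤ cos θ ∧ cos θ ≤ cos (α - β) := by
    refine ⟨fun h => ?_, fun h => mul_nonneg (sub_nonneg.2 h.1) (sub_nonneg.2 h.2)⟩
    constructor <;> by_contra! h' <;> nlinarith
  have hsum : α + β ∈ Icc 0 (2 * π) := ⟨by linarith [hα.1, hβ.1], by linarith [hα.2, hβ.2]⟩
  have hdiff : |α - β| ≤ π := abs_le.2 ⟨by linarith [hα.1, hβ.2], by linarith [hα.2, hβ.1]⟩
  rw [corrDet_cos_cos, hprod, cos_le_cos_iff_le_min hsum hθ, cos_le_cos_iff_abs_le hdiff hθ,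
    mem_Icc, and_comm]

theorem exists_forall_mem_Icc_iff {α ι : Type*} [LinearOrder α] [Nonempty α] [Fintype ι]
    {l u : ι → α} : (∃ θ, ∀ i, θ ∈ Icc (l i) (u i)) ↔ ∀ i j, l i ≤ u j := by
  refine ⟨fun ⟨θ, h⟩ i j => (h i).1.trans (h j).2, fun h => ?_⟩
  cases isEmpty_or_nonempty ι
  · exact ⟨Classical.arbitrary α, isEmptyElim⟩
  · exact ⟨Finset.univ.sup' Finset.univ_nonempty l, fun i =>
      ⟨Finset.le_sup' l (Finset.mem_univ i), Finset.sup'_le _ _ fun j _ => h j i⟩⟩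

theorem exists_corrDet_nonneg_iff {ι : Type*} {a b : ι → ℝ} (ha : ∀ k, |a k| ≤ 1)
    (hb : ∀ k, |b k| ≤ 1) :
    (∃ x, |x| ≤ 1 ∧ ∀ k, 0 ≤ corrDet (a k) (b k) x) ↔
      ∃ θ, ∀ k, θ ∈ Icc |arccos (a k) - arccos (b k)|
        (min (arccos (a k) + arccos (b k)) (2 * π - (arccos (a k) + arccos (b k)))) := by
  have hmem (y : ℝ) : arccos y ∈ Icc 0 π := ⟨arccos_nonneg y, arccos_le_pi y⟩
  have hcos {y : ℝ} (hy : |y| ≤ 1) : cos (arccos y) = y := cos_arccos (abs_le.1 hy).1 (abs_le.1 hy).2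
  constructor
  · rintro ⟨x, hx, h⟩
    refine ⟨arccos x, fun k => (corrDet_cos_nonneg_iff (hmem _) (hmem _) (hmem _)).1 ?_⟩
    rw [hcos hx, hcos (ha k), hcos (hb k)]
    exact h k
  · rintro ⟨θ, h⟩
    refine ⟨cos θ, abs_cos_le_one θ, fun k => ?_⟩
    have hθ : θ ∈ Icc 0 π := ⟨(abs_nonneg _).trans (h k).1, by
      linarith [(h k).2.trans (min_le_left _ _), (h k).2.trans (min_le_right _ _)]⟩
    rw [← hcos (ha k), ← hcos (hb k)]
    exact (corrDet_cos_nonneg_iff (hmem _) (hmem _) hθ).2 (h k)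

theorem abs_arcsin_le_pi_iff (a b c d : ℝ) :
    (|arcsin a + arcsin b + arcsin c - arcsin d| ≤ π ∧
      |arcsin a + arcsin b - arcsin c + arcsin d| ≤ π ∧
      |arcsin a - arcsin b + arcsin c + arcsin d| ≤ π ∧
      |-arcsin a + arcsin b + arcsin c + arcsin d| ≤ π) ↔
    |arccos c - arccos d| ≤ min (arccos a + arccos b) (2 * π - (arccos a + arccos b)) ∧
      |arccos a - arccos b| ≤ min (arccos c + arccos d) (2 * π - (arccos c + arccos d)) := by
  simp only [arcsin_eq_pi_div_two_sub_arccos, abs_le, le_min_iff, and_assoc]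
  constructor <;> rintro ⟨h₁, h₂, h₃, h₄, h₅, h₆, h₇, h₈⟩ <;>
    exact ⟨by linarith, by linarith, by linarith, by linarith, by linarith, by linarith,
      by linarith, by linarith⟩

section Completion

variable {n : Type*} {C : Matrix (Fin 2) n ℝ} {B : Matrix n n ℝ} {x : ℝ}

theorem abs_le_one_of_posSemidef_fromBlocks
    (hΓ : (fromBlocks !![(1 : ℝ), x; x, 1] C Cᵀ B).PosSemidef) : |x| ≤ 1 := by
  have h := (hΓ.submatrix Sum.inl).det_nonneg
  simp only [submatrix, fromBlocks_apply₁₁, det_fin_two, of_apply, cons_val', cons_val_zero,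
    cons_val_one, empty_val', cons_val_fin_one] at h
  rw [← sq_le_one_iff_abs_le_one]
  linarith

theorem corrDet_nonneg_of_posSemidef_fromBlocks [DecidableEq n]
    (hΓ : (fromBlocks !![(1 : ℝ), x; x, 1] C Cᵀ B).PosSemidef) (hB : ∀ j, B j j = 1) (k : n) :
    0 ≤ corrDet (C 0 k) (C 1 k) x := by
  have h := (hΓ.submatrix ![Sum.inl 0, Sum.inl 1, Sum.inr k]).det_nonneg
  rw [det_fin_three] at h
  simp only [submatrix_apply, cons_val_zero, cons_val_one, cons_val, cons_val', cons_val_fin_one,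
    of_apply, fromBlocks_apply₁₁, fromBlocks_apply₁₂, fromBlocks_apply₂₁, fromBlocks_apply₂₂,
    transpose_apply, hB] at h
  rw [corrDet]
  linarith

end Completion

theorem exists_sq_add_sq_le_one_of_corrDet_nonneg {a b x s : ℝ} (hxs : x ^ 2 + s ^ 2 = 1)
    (ha : |a| ≤ 1) (h : 0 ≤ corrDet a b x) : ∃ q, x * a + s * q = b ∧ a ^ 2 + q ^ 2 ≤ 1 := by
  have ha' : a ^ 2 ≤ 1 := sq_le_one_iff_abs_le_one a |>.2 ha
  have hsq : (b - x * a) ^ 2 ≤ (1 - a ^ 2) * s ^ 2 := by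
    rw [corrDet] at h
    linear_combination h - (1 - a ^ 2) * hxs
  rcases eq_or_ne s 0 with rfl | hs
  · refine ⟨0, ?_, by linarith⟩
    nlinarith [sq_nonneg (b - x * a)]
  · refine ⟨(b - x * a) / s, by field_simp; ring, ?_⟩
    rw [div_pow, ← le_sub_iff_add_le', div_le_iff₀ (by positivity)]
    linarith

theorem exists_posSemidef_fromBlocks_of_corrDet_nonneg {n : Type*} [Fintype n] [DecidableEq n]
    {C : Matrix (Fin 2) n ℝ} {x : ℝ} (hC : ∀ k, |C 0 k| ≤ 1) (hx : |x| ≤ 1)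
    (h : ∀ k, 0 ≤ corrDet (C 0 k) (C 1 k) x) :
    ∃ B : Matrix n n ℝ, B.IsSymm ∧ (∀ j, B j j = 1) ∧
      (fromBlocks !![(1 : ℝ), x; x, 1] C Cᵀ B).PosSemidef := by
  set s := √(1 - x ^ 2)
  have hxs : x ^ 2 + s ^ 2 = 1 := by
    rw [sq_sqrt (by nlinarith [sq_le_one_iff_abs_le_one x |>.2 hx])]
    ring
  choose q hq using fun k => exists_sq_add_sq_le_one_of_corrDet_nonneg hxs (hC k) (h k)
  let L : Matrix (Fin 2) (Fin 2) ℝ := !![1, x; 0, s]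
  let W : Matrix (Fin 2) n ℝ := of ![C 0, q]
  let d : n → ℝ := fun k => 1 - C 0 k ^ 2 - q k ^ 2
  have hL : Lᵀ * L = !![1, x; x, 1] := by
    ext i j
    fin_cases i <;> fin_cases j <;> simp [L, mul_apply, Fin.sum_univ_two, ← sq, hxs]
  have hLW : Lᵀ * W = C := by
    ext i k
    fin_cases i <;> simp [L, W, mul_apply, Fin.sum_univ_two, (hq k).1]
  have hWL : Wᵀ * L = Cᵀ := by rw [← hLW, transpose_mul, transpose_transpose]
  refine ⟨Wᵀ * W + diagonal d, ?_, fun j => ?_, ?_⟩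
  · simp [IsSymm, transpose_add, transpose_mul]
  · simp only [W, d, Matrix.add_apply, mul_apply, transpose_apply, of_apply, cons_val', cons_val_fin_one,
      Fin.sum_univ_two, cons_val_zero, cons_val_one, diagonal_apply_eq]
    ring
  · have hd : 0 ≤ d := fun k => by simp only [d, Pi.zero_apply]; linarith [(hq k).2]
    simpa only [conjTranspose_eq_transpose_of_trivial, hL, hLW, hWL]
      using posSemidef_fromBlocks_gram_add_diagonal L W hd

theorem exists_posSemidef_fromBlocks_iff {n : Type*} [Fintype n] [DecidableEq n]
    {C : Matrix (Fin 2) n ℝ} (hC : ∀ k, |C 0 k| ≤ 1) :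
    (∃ (x : ℝ) (B : Matrix n n ℝ), B.IsSymm ∧ (∀ j, B j j = 1) ∧
      (fromBlocks !![(1 : ℝ), x; x, 1] C Cᵀ B).PosSemidef) ↔
    ∃ x, |x| ≤ 1 ∧ ∀ k, 0 ≤ corrDet (C 0 k) (C 1 k) x := by
  constructor
  · rintro ⟨x, B, -, hB, hΓ⟩
    exact ⟨x, abs_le_one_of_posSemidef_fromBlocks hΓ,
      corrDet_nonneg_of_posSemidef_fromBlocks hΓ hB⟩
  · rintro ⟨x, hx, h⟩
    exact ⟨x, exists_posSemidef_fromBlocks_of_corrDet_nonneg hC hx h⟩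

theorem stmt_1_general (n : ℕ) (C : Matrix (Fin 2) (Fin n) ℝ)
    (hC : ∀ (k : Fin 2) (i : Fin n), |C k i| ≤ 1) :
    (∃ (x : ℝ) (B : Matrix (Fin n) (Fin n) ℝ), B.IsSymm ∧ (∀ j, B j j = 1) ∧
      (Matrix.fromBlocks !![(1 : ℝ), x; x, 1] C Cᵀ B).PosSemidef) ↔
    (∀ i j : Fin n,
      |Real.arcsin (C 0 i) + Real.arcsin (C 1 i) + Real.arcsin (C 0 j)
        - Real.arcsin (C 1 j)| ≤ Real.pi ∧
      |Real.arcsin (C 0 i) + Real.arcsin (C 1 i) - Real.arcsin (C 0 j)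
        + Real.arcsin (C 1 j)| ≤ Real.pi ∧
      |Real.arcsin (C 0 i) - Real.arcsin (C 1 i) + Real.arcsin (C 0 j)
        + Real.arcsin (C 1 j)| ≤ Real.pi ∧
      |-Real.arcsin (C 0 i) + Real.arcsin (C 1 i) + Real.arcsin (C 0 j)
        + Real.arcsin (C 1 j)| ≤ Real.pi) := by
  rw [exists_posSemidef_fromBlocks_iff (hC 0), exists_corrDet_nonneg_iff (hC 0) (hC 1),
    exists_forall_mem_Icc_iff]
  simp only [abs_arcsin_le_pi_iff]
  exact ⟨fun h i j => ⟨h j i, h i j⟩, fun h i j => (h i j).2⟩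

/-- Theorem 1 of the paper: the partial matrix `Γ = [[A, C],[Cᵀ, B]]` with
`A = [[1,x],[x,1]]` and `B` symmetric with unit diagonal can be completed to a
positive semidefinite matrix iff the four arcsine inequalities hold for all
pairs of columns `i, j`. -/
theorem stmt_1 (n : ℕ) (hn : 1 ≤ n) (C : Matrix (Fin 2) (Fin n) ℝ)
    (hC : ∀ (k : Fin 2) (i : Fin n), |C k i| ≤ 1) :
    (∃ (x : ℝ) (B : Matrix (Fin n) (Fin n) ℝ), B.IsSymm ∧ (∀ j, B j j = 1) ∧
      (Matrix.fromBlocks !![(1 : ℝ), x; x, 1] C Cᵀ B).PosSemidef) ↔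
    (∀ i j : Fin n,
      |Real.arcsin (C 0 i) + Real.arcsin (C 1 i) + Real.arcsin (C 0 j)
        - Real.arcsin (C 1 j)| ≤ Real.pi ∧
      |Real.arcsin (C 0 i) + Real.arcsin (C 1 i) - Real.arcsin (C 0 j)
        + Real.arcsin (C 1 j)| ≤ Real.pi ∧
      |Real.arcsin (C 0 i) - Real.arcsin (C 1 i) + Real.arcsin (C 0 j)
        + Real.arcsin (C 1 j)| ≤ Real.pi ∧
      |-Real.arcsin (C 0 i) + Real.arcsin (C 1 i) + Real.arcsin (C 0 j)
        + Real.arcsin (C 1 j)| ≤ Real.pi) :=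
  stmt_1_general n C hC
end

section
/- Let n ≥ 1, let x ∈ (−1, 1), and let C be a real 2×n matrix such that 1 − x² − C_{1i}² − C_{2i}² + 2x·C_{1i}·C_{2i} ≥ 0 for every i = 1, …, n. Let A = [[1, x],[x, 1]] and define the n×n matrix B by B_{ii} = 1 and B_{ij} = (CᵀA⁻¹C)_{ij} for i ≠ j. Then the (n+2)×(n+2) block matrix Γ = [[A, C],[Cᵀ, B]] is positive semidefinite. -/
open Matrix

/-! Since `A` is positive definite, `Γ` is positive semidefinite iff the Schur complement
`B - Cᵀ A⁻¹ C` is. The off-diagonal entries of `B` are chosen so that this complement is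
diagonal, with `i`-th entry `1 - (Cᵀ A⁻¹ C)ᵢᵢ`; expanding `A⁻¹ = (1 - x²)⁻¹ [[1, -x], [-x, 1]]`,
its nonnegativity is exactly the hypothesis on the `i`-th column of `C`. -/

namespace Matrix

theorem posSemidef_fromBlocks_of_offDiag_eq {m n K : Type*} [Fintype m] [Fintype n]
    [DecidableEq m] [DecidableEq n] [Field K] [PartialOrder K] [StarRing K]
    [StarOrderedRing K] {A : Matrix m m K} (hA : A.PosDef) (C : Matrix m n K)
    (B : Matrix n n K) (hoff : ∀ i j, i ≠ j → B i j = (Cᴴ * A⁻¹ * C) i j)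
    (hdiag : ∀ i, (Cᴴ * A⁻¹ * C) i i ≤ B i i) :
    (fromBlocks A C Cᴴ B).PosSemidef := by
  have := hA.isUnit.invertible
  have hschur : B - Cᴴ * A⁻¹ * C = diagonal fun i => B i i - (Cᴴ * A⁻¹ * C) i i := by
    ext i j
    rcases eq_or_ne i j with rfl | hij
    · simp
    · simp [hoff i j hij, hij]
  rw [PosDef.fromBlocks₁₁ C B hA, hschur, posSemidef_diagonal_iff]
  exact fun i => sub_nonneg.mpr (hdiag i)

theorem posDef_fin_two_of {a b d : ℝ} (ha : 0 < a) (hdet : 0 < a * d - b ^ 2) :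
    (!![a, b; b, d]).PosDef := by
  refine PosDef.of_dotProduct_mulVec_pos ?_ fun v hv => ?_
  · ext i j
    fin_cases i <;> fin_cases j <;> rfl
  have hform : star v ⬝ᵥ !![a, b; b, d] *ᵥ v = a * v 0 ^ 2 + 2 * b * v 0 * v 1 + d * v 1 ^ 2 := by
    simp only [dotProduct, Pi.star_apply, star_trivial, mulVec, of_apply, cons_val',
      cons_val_fin_one, Fin.sum_univ_two, cons_val_zero, cons_val_one]
    ring
  have hsq : a * (a * v 0 ^ 2 + 2 * b * v 0 * v 1 + d * v 1 ^ 2)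
      = (a * v 0 + b * v 1) ^ 2 + (a * d - b ^ 2) * v 1 ^ 2 := by ring
  rw [hform]
  refine pos_of_mul_pos_right ?_ ha.le
  rw [hsq]
  rcases eq_or_ne (v 1) 0 with h1 | h1
  · have h0 : v 0 ≠ 0 := fun h0 => hv (funext fun i => by fin_cases i <;> simp [h0, h1])
    simpa [h1] using sq_pos_of_ne_zero (mul_ne_zero ha.ne' h0)
  · exact add_pos_of_nonneg_of_pos (sq_nonneg _) (mul_pos hdet (sq_pos_of_ne_zero h1))

theorem inv_fin_two_of {K : Type*} [Field K] (a b c d : K) :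
    (!![a, b; c, d])⁻¹ = (a * d - b * c)⁻¹ • !![d, -b; -c, a] := by
  rw [inv_def, det_fin_two_of, adjugate_fin_two_of, Ring.inverse_eq_inv']

theorem transpose_mul_inv_unitDiag_mul_apply_self {n : ℕ} (x : ℝ)
    (C : Matrix (Fin 2) (Fin n) ℝ) (i : Fin n) :
    (Cᵀ * (!![(1 : ℝ), x; x, 1])⁻¹ * C) i i
      = (C 0 i ^ 2 + C 1 i ^ 2 - 2 * x * C 0 i * C 1 i) / (1 - x ^ 2) := by
  simp only [inv_fin_two_of, mul_one, smul_of, smul_cons, smul_eq_mul, mul_neg, smul_empty,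
    mul_apply, transpose_apply, of_apply, cons_val', cons_val_fin_one, Fin.sum_univ_two,
    cons_val_zero, cons_val_one]
  ring

end Matrix

theorem stmt_8_general (n : ℕ) (x : ℝ) (hx : x ∈ Set.Ioo (-1 : ℝ) 1)
    (C : Matrix (Fin 2) (Fin n) ℝ)
    (hC : ∀ i, 1 - x ^ 2 - (C 0 i) ^ 2 - (C 1 i) ^ 2
      + 2 * x * C 0 i * C 1 i ≥ 0)
    (B : Matrix (Fin n) (Fin n) ℝ)
    (hB : ∀ i j, B i j =
      if i = j then 1 else (Cᵀ * (!![(1 : ℝ), x; x, 1])⁻¹ * C) i j) :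
    (Matrix.fromBlocks !![(1 : ℝ), x; x, 1] C Cᵀ B).PosSemidef := by
  obtain ⟨hx₁, hx₂⟩ := hx
  have hdet : 0 < 1 - x ^ 2 := by nlinarith
  have hA := posDef_fin_two_of (b := x) (d := 1) one_pos (by linarith)
  refine posSemidef_fromBlocks_of_offDiag_eq hA C B (fun i j hij => by simp [hB, hij]) fun i => ?_
  rw [conjTranspose_eq_transpose_of_trivial, hB, if_pos rfl,
    transpose_mul_inv_unitDiag_mul_apply_self, div_le_one hdet]
  linarith [hC i]

/-- If `|x| < 1` and `1 - x² - C₁ᵢ² - C₂ᵢ² + 2x C₁ᵢ C₂ᵢ ≥ 0` for all `i`, then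
completing `B` with off-diagonal entries `(Cᵀ A⁻¹ C)_{ij}` and unit diagonal
yields a positive semidefinite block matrix `[[A, C],[Cᵀ, B]]`. -/
theorem stmt_8 (n : ℕ) (hn : 1 ≤ n) (x : ℝ) (hx : x ∈ Set.Ioo (-1 : ℝ) 1)
    (C : Matrix (Fin 2) (Fin n) ℝ)
    (hC : ∀ i, 1 - x ^ 2 - (C 0 i) ^ 2 - (C 1 i) ^ 2
      + 2 * x * C 0 i * C 1 i ≥ 0)
    (B : Matrix (Fin n) (Fin n) ℝ)
    (hB : ∀ i j, B i j =
      if i = j then 1 else (Cᵀ * (!![(1 : ℝ), x; x, 1])⁻¹ * C) i j) :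
    (Matrix.fromBlocks !![(1 : ℝ), x; x, 1] C Cᵀ B).PosSemidef :=
  stmt_8_general n x hx C hC B hB
end

section
/- Let ρ ∈ (−1, 1) and let f : ℝ² → ℝ be the bivariate Gaussian density f(a, b) = (2π√(1 − ρ²))⁻¹ · exp(−(a² − 2ρab + b²)/(2(1 − ρ²))). Then ∫∫_{ℝ²} sgn(a)·sgn(b)·f(a, b) da db = (2/π)·arcsin(ρ). -/
/-!
In polar coordinates `(a, b) = (r cos θ, r sin θ)` the quadratic form becomes
`r² (1 - ρ sin 2θ)` and `sgn a · sgn b = sgn (sin 2θ)`, so the radial integral is elementary and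
leaves `(√(1 - ρ²) / 2π) ∫_{-π}^{π} sgn (sin 2θ) / (1 - ρ sin 2θ) dθ`. This integrand has period
`π`; on `(0, π/2)` the substitution `t = tan θ` gives
`∫ dθ / (1 - ρ sin 2θ) = (π/2 + arcsin ρ) / √(1 - ρ²)`, and `(π/2, π)` contributes minus the same
expression at `-ρ`.
-/

open Real MeasureTheory Set Filter Topology

namespace Real

lemma measurable_sign : Measurable Real.sign :=
  Measurable.ite (measurableSet_lt measurable_id measurable_const) measurable_const
    (Measurable.ite (measurableSet_lt measurable_const measurable_id) measurable_const
      measurable_const)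

lemma sign_mul (x y : ℝ) : Real.sign (x * y) = Real.sign x * Real.sign y := by
  rcases lt_trichotomy x 0 with hx | rfl | hx <;> rcases lt_trichotomy y 0 with hy | rfl | hy <;>
    simp [sign_of_neg, sign_of_pos, mul_pos_of_neg_of_neg, mul_neg_of_neg_of_pos,
      mul_neg_of_pos_of_neg, *]

lemma sign_mul_of_pos {r : ℝ} (hr : 0 < r) (x : ℝ) : Real.sign (r * x) = Real.sign x := by
  rw [sign_mul, sign_of_pos hr, one_mul]

lemma abs_sign_le_one (x : ℝ) : |Real.sign x| ≤ 1 := by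
  rcases sign_apply_eq x with h | h | h <;> simp [h]

lemma mul_sin_le_abs (ρ x : ℝ) : ρ * sin x ≤ |ρ| :=
  (le_abs_self _).trans <| by
    rw [abs_mul]; exact mul_le_of_le_one_right (abs_nonneg ρ) (abs_sin_le_one x)

lemma sin_two_mul_pos_of_mem_Ioo {θ : ℝ} (hθ : θ ∈ Ioo 0 (π / 2)) : 0 < sin (2 * θ) :=
  sin_pos_of_pos_of_lt_pi (by linarith [hθ.1]) (by linarith [hθ.2])

end Real

lemma integral_Ioi_mul_exp_neg_mul_sq {b : ℝ} (hb : 0 < b) :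
    ∫ r in Ioi (0 : ℝ), r * exp (-b * r ^ 2) = (2 * b)⁻¹ := by
  have h := integral_mul_cexp_neg_mul_sq (b := b) (by simpa using hb)
  rw [← Complex.ofReal_inj, ← integral_complex_ofReal]
  push_cast
  exact h

lemma integral_prod_mul_exp_neg_mul_sq {μ : Measure ℝ} [IsFiniteMeasure μ] {b g : ℝ → ℝ}
    (hb : Measurable b) (hg : Measurable g) {b₀ C : ℝ} (hb₀ : 0 < b₀) (hb₀b : ∀ θ, b₀ ≤ b θ)
    (hgC : ∀ θ, |g θ| ≤ C) :
    ∫ p, p.1 * exp (-b p.2 * p.1 ^ 2) * g p.2 ∂((volume.restrict (Ioi 0)).prod μ) =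
      ∫ θ, g θ / (2 * b θ) ∂μ := by
  have hint : Integrable (fun p : ℝ × ℝ ↦ p.1 * exp (-b p.2 * p.1 ^ 2) * g p.2)
      ((volume.restrict (Ioi 0)).prod μ) := by
    refine Integrable.mono' ((integrable_mul_exp_neg_mul_sq hb₀).norm.restrict.mul_prod
      (integrable_const C)) (by fun_prop) (ae_of_all _ fun p ↦ ?_)
    rw [norm_mul, norm_mul, norm_mul, Real.norm_eq_abs (g _)]
    gcongr
    · rw [norm_of_nonneg (exp_pos _).le, norm_of_nonneg (exp_pos _).le, exp_le_exp]
      exact mul_le_mul_of_nonneg_right (neg_le_neg (hb₀b p.2)) (sq_nonneg _)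
    · exact hgC p.2
  rw [integral_prod_symm _ hint]
  refine integral_congr_ae (ae_of_all _ fun θ ↦ ?_)
  dsimp only
  rw [integral_mul_const, integral_Ioi_mul_exp_neg_mul_sq (hb₀.trans_le (hb₀b θ))]
  ring

lemma integral_inv_one_sub_mul_sin_two_mul {ρ : ℝ} (hρ : ρ ∈ Ioo (-1) 1) :
    ∫ θ in 0..(π / 2), (1 - ρ * sin (2 * θ))⁻¹ = (π / 2 + arcsin ρ) / √(1 - ρ ^ 2) := by
  have hρ₂ : 0 < 1 - ρ ^ 2 := by nlinarith [hρ.1, hρ.2]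
  have hs : 0 < √(1 - ρ ^ 2) := sqrt_pos.2 hρ₂
  set s := √(1 - ρ ^ 2)
  have hs2 : s ^ 2 = 1 - ρ ^ 2 := sq_sqrt hρ₂.le
  have hβ : ∀ θ, 0 < 1 - ρ * sin (2 * θ) := fun θ ↦ by
    linarith [mul_sin_le_abs ρ (2 * θ), abs_lt.2 hρ]
  set F : ℝ → ℝ := fun θ ↦ s⁻¹ * arctan ((tan θ - ρ) / s)
  have hF : ∀ θ ∈ Ioo 0 (π / 2), HasDerivAt F (1 - ρ * sin (2 * θ))⁻¹ θ := by
    intro θ hθ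
    have hc : 0 < cos θ := cos_pos_of_mem_Ioo ⟨by linarith [hθ.1, pi_pos], hθ.2⟩
    refine ((((hasDerivAt_tan hc.ne').sub_const ρ).div_const s).arctan.const_mul s⁻¹).congr_deriv ?_
    -- `cos θ ^ 2 * (s ^ 2 + (tan θ - ρ) ^ 2) = 1 - ρ * sin (2 * θ)`
    have hβθ := hβ θ
    rw [sin_two_mul] at hβθ
    rw [tan_eq_sin_div_cos, sin_two_mul]
    field_simp
    rw [eq_div_iff (by linarith), hs2]
    linear_combination -sin_sq_add_cos_sq θ
  have h0 : Tendsto F (𝓝[>] 0) (𝓝 (s⁻¹ * arctan (-ρ / s))) := by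
    have : ContinuousAt F 0 := by
      have := continuousAt_tan.2 (by simp : cos 0 ≠ 0)
      fun_prop
    simpa [F] using this.continuousWithinAt.tendsto
  have hpi : Tendsto F (𝓝[<] (π / 2)) (𝓝 (s⁻¹ * (π / 2))) :=
    ((tendsto_arctan_atTop.mono_right nhdsWithin_le_nhds).comp
      ((tendsto_atTop_add_const_right _ _ tendsto_tan_pi_div_two).atTop_div_const hs)).const_mul _
  rw [intervalIntegral.integral_eq_sub_of_hasDerivAt_of_tendsto (by positivity) hF
    ((Continuous.inv₀ (by fun_prop) fun θ ↦ (hβ θ).ne').intervalIntegrable _ _)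
    h0 hpi, neg_div, arctan_neg, ← arcsin_eq_arctan hρ]
  ring

lemma intervalIntegrable_sign_sin_two_mul_div {ρ : ℝ} (hρ : ρ ∈ Ioo (-1) 1) (a b : ℝ) :
    IntervalIntegrable (fun θ ↦ Real.sign (sin (2 * θ)) / (1 - ρ * sin (2 * θ))) volume a b := by
  have hρ' : 0 < 1 - |ρ| := by linarith [abs_lt.2 hρ]
  refine (intervalIntegrable_const (c := (1 - |ρ|)⁻¹)).mono_fun'
    ((measurable_sign.comp (by fun_prop)).div (by fun_prop)).aestronglyMeasurable
    (ae_of_all _ fun θ ↦ ?_)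
  have hβ : 1 - |ρ| ≤ 1 - ρ * sin (2 * θ) := by linarith [mul_sin_le_abs ρ (2 * θ)]
  dsimp only
  have hβ₀ := hρ'.trans_le hβ
  rw [norm_div, norm_of_nonneg hβ₀.le, div_eq_mul_inv]
  exact (mul_le_of_le_one_left (inv_pos.2 hβ₀).le (abs_sign_le_one _)).trans (inv_anti₀ hρ' hβ)

lemma integral_sign_sin_two_mul_div {ρ : ℝ} (hρ : ρ ∈ Ioo (-1) 1) :
    ∫ θ in (-π)..π, Real.sign (sin (2 * θ)) / (1 - ρ * sin (2 * θ)) =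
      4 * arcsin ρ / √(1 - ρ ^ 2) := by
  set h : ℝ → ℝ := fun θ ↦ Real.sign (sin (2 * θ)) / (1 - ρ * sin (2 * θ))
  have hper : Function.Periodic h π := fun θ ↦ by
    simp only [h, mul_add, sin_add_two_pi]
  have hint := intervalIntegrable_sign_sin_two_mul_div hρ
  have hfull : ∫ θ in (-π)..π, h θ = 2 * ∫ θ in 0..π, h θ := by
    have := hper.intervalIntegral_add_zsmul_eq 2 (-π) hint
    rw [hper.intervalIntegral_add_eq (-π) 0, zero_add, two_zsmul, two_zsmul,
      neg_add_cancel_left] at this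
    rw [this, two_mul]
  have hfirst : ∫ θ in 0..(π / 2), h θ = ∫ θ in 0..(π / 2), (1 - ρ * sin (2 * θ))⁻¹ := by
    refine intervalIntegral.integral_congr_Ioo_of_le (by positivity) fun θ hθ ↦ ?_
    simp only [h, sign_of_pos (sin_two_mul_pos_of_mem_Ioo hθ), one_div]
  have hsecond : ∫ θ in (π / 2)..π, h θ = -∫ θ in 0..(π / 2), (1 - -ρ * sin (2 * θ))⁻¹ := by
    have hshift := intervalIntegral.integral_comp_add_right h (π / 2) (a := 0) (b := π / 2)
    rw [zero_add, add_halves] at hshift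
    rw [← hshift, ← intervalIntegral.integral_neg]
    refine intervalIntegral.integral_congr_Ioo_of_le (by positivity) fun θ hθ ↦ ?_
    simp only [h, show 2 * (θ + π / 2) = 2 * θ + π by ring, sin_add_pi, Real.sign_neg,
      sign_of_pos (sin_two_mul_pos_of_mem_Ioo hθ)]
    ring
  rw [hfull, ← intervalIntegral.integral_add_adjacent_intervals (hint _ _) (hint _ _), hfirst,
    hsecond, integral_inv_one_sub_mul_sin_two_mul hρ,
    integral_inv_one_sub_mul_sin_two_mul (by constructor <;> linarith [hρ.1, hρ.2]), neg_sq,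
    arcsin_neg]
  ring

noncomputable def bivariateGaussianPDF (ρ a b : ℝ) : ℝ :=
  (2 * π * √(1 - ρ ^ 2))⁻¹ * exp (-(a ^ 2 - 2 * ρ * a * b + b ^ 2) / (2 * (1 - ρ ^ 2)))

lemma mul_sign_mul_sign_mul_bivariateGaussianPDF_polar (ρ : ℝ) {r : ℝ} (hr : 0 < r) (θ : ℝ) :
    r * (Real.sign (r * cos θ) * Real.sign (r * sin θ) *
      bivariateGaussianPDF ρ (r * cos θ) (r * sin θ)) =
    (2 * π * √(1 - ρ ^ 2))⁻¹ * (r * exp (-((1 - ρ * sin (2 * θ)) / (2 * (1 - ρ ^ 2))) * r ^ 2) *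
      Real.sign (sin (2 * θ))) := by
  have hsign : Real.sign (r * cos θ) * Real.sign (r * sin θ) = Real.sign (sin (2 * θ)) := by
    rw [sign_mul_of_pos hr, sign_mul_of_pos hr, ← sign_mul, sin_two_mul, mul_assoc,
      sign_mul_of_pos two_pos, mul_comm]
  have hquad : (r * cos θ) ^ 2 - 2 * ρ * (r * cos θ) * (r * sin θ) + (r * sin θ) ^ 2 =
      (1 - ρ * sin (2 * θ)) * r ^ 2 := by
    rw [sin_two_mul]; linear_combination r ^ 2 * sin_sq_add_cos_sq θ
  rw [bivariateGaussianPDF, hsign, hquad]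
  ring_nf

/-- For the centered bivariate Gaussian density with unit variances and
correlation `ρ`, the expectation of `sgn(a)·sgn(b)` equals `(2/π)·arcsin ρ`. -/
theorem stmt_9 (ρ : ℝ) (hρ : ρ ∈ Set.Ioo (-1 : ℝ) 1) (f : ℝ → ℝ → ℝ)
    (hf : ∀ a b, f a b = (2 * Real.pi * Real.sqrt (1 - ρ ^ 2))⁻¹ *
      Real.exp (-(a ^ 2 - 2 * ρ * a * b + b ^ 2) / (2 * (1 - ρ ^ 2)))) :
    ∫ p : ℝ × ℝ, Real.sign p.1 * Real.sign p.2 * f p.1 p.2 =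
      (2 / Real.pi) * Real.arcsin ρ := by
  obtain rfl : f = bivariateGaussianPDF ρ := funext fun a ↦ funext (hf a)
  have hρ₁ : 0 < 1 - |ρ| := sub_pos.2 (abs_lt.2 hρ)
  have hρ₂ : 0 < 1 - ρ ^ 2 := by nlinarith [hρ.1, hρ.2]
  have hβ : ∀ θ, 1 - |ρ| ≤ 1 - ρ * sin (2 * θ) := fun θ ↦ by linarith [mul_sin_le_abs ρ (2 * θ)]
  set b : ℝ → ℝ := fun θ ↦ (1 - ρ * sin (2 * θ)) / (2 * (1 - ρ ^ 2))
  have hb : ∀ θ, Real.sign (sin (2 * θ)) / (2 * b θ) =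
      (1 - ρ ^ 2) * (Real.sign (sin (2 * θ)) / (1 - ρ * sin (2 * θ))) := fun θ ↦ by
    have := hρ₁.trans_le (hβ θ)
    simp only [b]
    field_simp
  rw [← integral_comp_polarCoord_symm, polarCoord_target]
  calc _ = ∫ p in Ioi 0 ×ˢ Ioo (-π) π, (2 * π * √(1 - ρ ^ 2))⁻¹ *
          (p.1 * exp (-b p.2 * p.1 ^ 2) * Real.sign (sin (2 * p.2))) :=
        setIntegral_congr_fun (measurableSet_Ioi.prod measurableSet_Ioo) fun p hp ↦
          mul_sign_mul_sign_mul_bivariateGaussianPDF_polar ρ hp.1 p.2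
    _ = (2 * π * √(1 - ρ ^ 2))⁻¹ * ((1 - ρ ^ 2) *
          ∫ θ in (-π)..π, Real.sign (sin (2 * θ)) / (1 - ρ * sin (2 * θ))) := by
        rw [integral_const_mul, Measure.volume_eq_prod, ← Measure.prod_restrict,
          integral_prod_mul_exp_neg_mul_sq (b := b) (g := fun θ ↦ Real.sign (sin (2 * θ)))
            (by fun_prop) (measurable_sign.comp (by fun_prop)) (div_pos hρ₁ (by positivity))
            (fun θ ↦ div_le_div_of_nonneg_right (hβ θ) (by positivity)) (fun _ ↦ abs_sign_le_one _)]
        simp_rw [hb]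
        rw [integral_const_mul, ← integral_Ioc_eq_integral_Ioo,
          ← intervalIntegral.integral_of_le (by linarith [pi_pos])]
    _ = 2 / π * arcsin ρ := by
        rw [integral_sign_sin_two_mul_div hρ]
        field_simp
        rw [sq_sqrt hρ₂.le]
        ring
end

section
/- Let n ≥ 2, let c₁, c₂ ∈ (−1, 1), d₁, …, dₙ ∈ (−1, 1), and let e_{xy} ∈ ℝ for x ∈ {1, 2}, y ∈ {1, …, n}. Define D_{xy} = (e_{xy} − c_x·d_y)/√((1 − c_x²)(1 − d_y²)), and assume |D_{xy}| ≤ 1 for all x, y. Then there exist a real number t and a real symmetric n×n matrix Y with Y_{jj} = 1 such that the (n+3)×(n+3) real symmetric matrix Γ¹ = [[1, cᵀ, dᵀ],[c, X, E],[d, Eᵀ, Y]], where c = (c₁, c₂)ᵀ, d = (d₁, …, dₙ)ᵀ, X = [[1, t],[t, 1]], and E is the 2×n matrix with entries E_{xy} = e_{xy}, is positive semidefinite, if and only if for all i, j ∈ {1, …, n}, each of the four inequalities obtained by placing a single minus sign on one of the four terms holds: |arcsin(D_{1i}) + arcsin(D_{2i}) + arcsin(D_{1j}) − arcsin(D_{2j})|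 ≤ π and the three other placements of the minus sign. -/
/-!
Factor the certificate as a Gram matrix. Removing from the vectors of Alice's and Bob's
observables their component along the vector of the identity, and normalizing, leaves unit vectors
`u₀, u₁, w_y` with `⟪u_x, w_y⟫ = D_{xy}`; conversely such unit vectors, placed orthogonally to a
unit vector for the identity, are the Gram vectors of a certificate, `t` and `Y` being read off as
inner products. With `α_y = arccos D_{0y}`, `β_y = arccos D_{1y}` and `θ = ∠(u₀, u₁)`, the angles
between `u₀, u₁, w_y` are the sides of a spherical triangle,
`|α_y - β_y| ≤ θ ≤ min (α_y + β_y) (2π - α_y - β_y)`, and conversely any `θ` lying in all these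
windows is realized by vectors in `ℝ⁴`. Such a `θ` exists iff every lower end is at most every
upper end, and since `arcsin = π/2 - arccos` these comparisons are the four inequalities.
-/

open Matrix Real InnerProductGeometry
open scoped InnerProductSpace ComplexOrder

theorem Matrix.PosSemidef.exists_eq_gram {𝕜 ι : Type*} [RCLike 𝕜] [Fintype ι]
    {A : Matrix ι ι 𝕜} (hA : A.PosSemidef) : ∃ v : ι → EuclideanSpace 𝕜 ι, A = gram 𝕜 v := by
  classical
  open scoped MatrixOrder in
  obtain ⟨B, rfl⟩ := CStarAlgebra.nonneg_iff_eq_star_mul_self.mp hA.nonneg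
  refine ⟨fun i => WithLp.toLp 2 (fun k => B k i), ?_⟩
  ext i j
  simp [mul_apply, EuclideanSpace.inner_eq_star_dotProduct, dotProduct, mul_comm]

theorem Finite.exists_forall_le_and_le_iff {ι α : Type*} [Finite ι] [LinearOrder α] [Nonempty α]
    (L U : ι → α) : (∃ θ, ∀ i, L i ≤ θ ∧ θ ≤ U i) ↔ ∀ i j, L i ≤ U j := by
  refine ⟨fun ⟨θ, h⟩ i j => (h i).1.trans (h j).2, fun h => ?_⟩
  cases isEmpty_or_nonempty ι
  · exact ⟨Classical.arbitrary α, isEmptyElim⟩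
  · obtain ⟨i₀, hi₀⟩ := Finite.exists_max L
    exact ⟨L i₀, fun i => ⟨hi₀ i, h i₀ i⟩⟩

theorem real_inner_self_eq_one_iff {V : Type*} [NormedAddCommGroup V] [InnerProductSpace ℝ V]
    {x : V} : ⟪x, x⟫_ℝ = 1 ↔ ‖x‖ = 1 := by
  rw [real_inner_self_eq_norm_sq, pow_eq_one_iff_of_nonneg (norm_nonneg x) two_ne_zero]

theorem real_inner_fin_four (x y : EuclideanSpace ℝ (Fin 4)) :
    ⟪x, y⟫_ℝ = x 0 * y 0 + x 1 * y 1 + x 2 * y 2 + x 3 * y 3 := by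
  simp [EuclideanSpace.inner_eq_star_dotProduct, dotProduct, Fin.sum_univ_four, mul_comm]

section SphericalTriangle

def IsSphericalTriangle (a b c : ℝ) : Prop :=
  |a - b| ≤ c ∧ c ≤ min (a + b) (2 * π - (a + b))

theorem IsSphericalTriangle.rotate {a b c : ℝ} (h : IsSphericalTriangle a b c) :
    IsSphericalTriangle c a b := by
  unfold IsSphericalTriangle at *
  rw [abs_le, le_min_iff] at h ⊢
  refine ⟨⟨?_, ?_⟩, ?_, ?_⟩ <;> linarith

theorem IsSphericalTriangle.cos_add_le_cos_le_cos_sub {a b c : ℝ}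
    (h : IsSphericalTriangle a b c) : cos (a + b) ≤ cos c ∧ cos c ≤ cos (a - b) := by
  obtain ⟨h₁, h₂, h₃⟩ := And.imp_right le_min_iff.1 h
  have hc₀ : 0 ≤ c := (abs_nonneg _).trans h₁
  refine ⟨?_, ?_⟩
  · rcases le_total (a + b) π with hab | hab
    · exact cos_le_cos_of_nonneg_of_le_pi hc₀ hab h₂
    · rw [← cos_two_pi_sub]
      exact cos_le_cos_of_nonneg_of_le_pi hc₀ (by linarith) h₃
  · rw [← cos_abs (a - b)]
    exact cos_le_cos_of_nonneg_of_le_pi (abs_nonneg _) (by linarith) h₁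

theorem exists_unit_vector_inner_eq_cos {a b θ : ℝ} (h : IsSphericalTriangle a b θ) :
    ∃ w : EuclideanSpace ℝ (Fin 4), ‖w‖ = 1 ∧ ⟪!₂[1, 0, 0, 0], w⟫_ℝ = 0 ∧
      ⟪!₂[0, 1, 0, 0], w⟫_ℝ = cos a ∧ ⟪!₂[0, cos θ, sin θ, 0], w⟫_ℝ = cos b := by
  obtain ⟨hlo, hhi⟩ := h.rotate.cos_add_le_cos_le_cos_sub
  -- `k` is the cosine of the dihedral angle along `!₂[0, 1, 0, 0]`; `k = ∓1` gives `cos (θ ± a)`.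
  obtain ⟨k, hk, hkb⟩ : ∃ k ∈ Set.Icc (-1 : ℝ) 1, cos θ * cos a + sin θ * sin a * k = cos b :=
    intermediate_value_Icc (by norm_num) (by fun_prop)
      ⟨by simpa [cos_add] using hlo, by simpa [cos_sub] using hhi⟩
  have hk' : k ^ 2 ≤ 1 := by nlinarith [hk.1, hk.2]
  refine ⟨!₂[0, cos a, sin a * k, sin a * √(1 - k ^ 2)], real_inner_self_eq_one_iff.1 ?_, ?_, ?_,
    ?_⟩
  all_goals rw [real_inner_fin_four]; simp
  · linear_combination (sin a ^ 2) * sq_sqrt (sub_nonneg.2 hk') + sin_sq_add_cos_sq a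
  · linear_combination hkb

end SphericalTriangle

section InnerProductSpace

variable {V : Type*} [NormedAddCommGroup V] [InnerProductSpace ℝ V]

theorem InnerProductGeometry.angle_eq_arccos_of_norm_eq_one {x y : V} (hx : ‖x‖ = 1)
    (hy : ‖y‖ = 1) : angle x y = arccos ⟪x, y⟫_ℝ := by
  simp [angle, hx, hy]

theorem InnerProductGeometry.isSphericalTriangle_angle (x y z : V) :
    IsSphericalTriangle (angle x z) (angle y z) (angle x y) := by
  have h₁ := angle_le_angle_add_angle x z y
  have h₂ := angle_le_angle_add_angle y x z
  have h₃ := angle_le_angle_add_angle x (-z) y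
  rw [angle_neg_right, angle_neg_left, angle_comm z y] at h₃
  rw [angle_comm z y] at h₁
  rw [angle_comm y x] at h₂
  refine ⟨abs_le.2 ⟨?_, ?_⟩, le_min ?_ ?_⟩ <;> linarith [angle_le_angle_add_angle x y z]

noncomputable def normalizedResidual (v z : V) : V :=
  (√(1 - ⟪v, z⟫_ℝ ^ 2))⁻¹ • (z - ⟪v, z⟫_ℝ • v)

theorem inner_normalizedResidual {v : V} (hv : ‖v‖ = 1) (z z' : V) :
    ⟪normalizedResidual v z, normalizedResidual v z'⟫_ℝ =
      (⟪z, z'⟫_ℝ - ⟪v, z⟫_ℝ * ⟪v, z'⟫_ℝ) / (√(1 - ⟪v, z⟫_ℝ ^ 2) * √(1 - ⟪v, z'⟫_ℝ ^ 2)) := by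
  have hvv : ⟪v, v⟫_ℝ = 1 := real_inner_self_eq_one_iff.2 hv
  simp only [normalizedResidual, real_inner_smul_left, real_inner_smul_right, inner_sub_left,
    inner_sub_right, hvv, real_inner_comm v]
  field_simp
  ring

theorem norm_normalizedResidual {v z : V} (hv : ‖v‖ = 1) (hz : ‖z‖ = 1) (hvz : |⟪v, z⟫_ℝ| < 1) :
    ‖normalizedResidual v z‖ = 1 := by
  have hpos : 0 < 1 - ⟪v, z⟫_ℝ ^ 2 := by nlinarith [abs_lt.1 hvz]
  rw [← real_inner_self_eq_one_iff, inner_normalizedResidual hv, real_inner_self_eq_one_iff.2 hz,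
    mul_self_sqrt hpos.le, ← sq, div_self hpos.ne']

theorem inner_smul_add_smul_of_inner_eq_zero {v u u' : V} (hv : ‖v‖ = 1) (hu : ⟪v, u⟫_ℝ = 0)
    (hu' : ⟪v, u'⟫_ℝ = 0) (a b a' b' : ℝ) :
    ⟪a • v + b • u, a' • v + b' • u'⟫_ℝ = a * a' + b * b' * ⟪u, u'⟫_ℝ := by
  have hvv : ⟪v, v⟫_ℝ = 1 := real_inner_self_eq_one_iff.2 hv
  simp only [inner_add_left, inner_add_right, real_inner_smul_left, real_inner_smul_right, hvv, hu,
    hu', real_inner_comm v u]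
  ring

end InnerProductSpace

noncomputable def normalizedCovariance {κ : Type*} (c : Fin 2 → ℝ) (d : κ → ℝ)
    (e : Matrix (Fin 2) κ ℝ) (x : Fin 2) (y : κ) : ℝ :=
  (e x y - c x * d y) / √((1 - c x ^ 2) * (1 - d y ^ 2))

def momentMatrix {κ : Type*} (c : Fin 2 → ℝ) (d : κ → ℝ) (e : Matrix (Fin 2) κ ℝ) (t : ℝ)
    (Y : Matrix κ κ ℝ) : Matrix (Fin 1 ⊕ (Fin 2 ⊕ κ)) (Fin 1 ⊕ (Fin 2 ⊕ κ)) ℝ :=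
  fromBlocks 1 (of fun _ j => Sum.elim c d j) (of fun i _ => Sum.elim c d i)
    (fromBlocks !![1, t; t, 1] e eᵀ Y)

section MomentMatrix

variable {V κ : Type*} [NormedAddCommGroup V] [InnerProductSpace ℝ V] [Fintype κ]
  {c : Fin 2 → ℝ} {d : κ → ℝ} {e : Matrix (Fin 2) κ ℝ}

theorem exists_unit_vectors_of_posSemidef_momentMatrix {t : ℝ} {Y : Matrix κ κ ℝ}
    (hc : ∀ x, c x ∈ Set.Ioo (-1 : ℝ) 1) (hd : ∀ y, d y ∈ Set.Ioo (-1 : ℝ) 1)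
    (hY : ∀ j, Y j j = 1) (hM : (momentMatrix c d e t Y).PosSemidef) :
    ∃ (u : Fin 2 → EuclideanSpace ℝ (Fin 1 ⊕ (Fin 2 ⊕ κ)))
      (w : κ → EuclideanSpace ℝ (Fin 1 ⊕ (Fin 2 ⊕ κ))),
      (∀ x, ‖u x‖ = 1) ∧ (∀ y, ‖w y‖ = 1) ∧
        ∀ x y, ⟪u x, w y⟫_ℝ = normalizedCovariance c d e x y := by
  obtain ⟨g, hg⟩ := hM.exists_eq_gram
  have hg' (i j) : ⟪g i, g j⟫_ℝ = momentMatrix c d e t Y i j := by rw [hg, gram_apply]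
  set v := g (.inl 0)
  have hv : ‖v‖ = 1 := real_inner_self_eq_one_iff.1 <| by rw [hg']; simp [momentMatrix]
  have hvA (x) : ⟪v, g (.inr (.inl x))⟫_ℝ = c x := by simp [v, hg', momentMatrix]
  have hvB (y) : ⟪v, g (.inr (.inr y))⟫_ℝ = d y := by simp [v, hg', momentMatrix]
  have hA (x) : ‖g (.inr (.inl x))‖ = 1 := real_inner_self_eq_one_iff.1 <| by
    rw [hg']; fin_cases x <;> simp [momentMatrix]
  have hB (y) : ‖g (.inr (.inr y))‖ = 1 := real_inner_self_eq_one_iff.1 <| by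
    rw [hg']; simp [momentMatrix, hY]
  refine ⟨fun x => normalizedResidual v (g (.inr (.inl x))),
    fun y => normalizedResidual v (g (.inr (.inr y))),
    fun x => norm_normalizedResidual hv (hA x) (by simpa [hvA, abs_lt] using hc x),
    fun y => norm_normalizedResidual hv (hB y) (by simpa [hvB, abs_lt] using hd y),
    fun x y => ?_⟩
  rw [inner_normalizedResidual hv, hvA, hvB, hg', normalizedCovariance,
    sqrt_mul (by nlinarith [(hc x).1, (hc x).2])]
  simp [momentMatrix]

theorem exists_posSemidef_momentMatrix_of_unit_vectors {v : V} {u : Fin 2 → V} {w : κ → V}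
    (hc : ∀ x, c x ∈ Set.Ioo (-1 : ℝ) 1) (hd : ∀ y, d y ∈ Set.Ioo (-1 : ℝ) 1)
    (hv : ‖v‖ = 1) (hu : ∀ x, ‖u x‖ = 1) (hw : ∀ y, ‖w y‖ = 1)
    (hvu : ∀ x, ⟪v, u x⟫_ℝ = 0) (hvw : ∀ y, ⟪v, w y⟫_ℝ = 0)
    (huw : ∀ x y, ⟪u x, w y⟫_ℝ = normalizedCovariance c d e x y) :
    ∃ (t : ℝ) (Y : Matrix κ κ ℝ), Y.IsSymm ∧ (∀ j, Y j j = 1) ∧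
      (momentMatrix c d e t Y).PosSemidef := by
  have hc' (x) : 0 < 1 - c x ^ 2 := by nlinarith [(hc x).1, (hc x).2]
  have hd' (y) : 0 < 1 - d y ^ 2 := by nlinarith [(hd y).1, (hd y).2]
  let a x := c x • v + √(1 - c x ^ 2) • u x
  let b y := d y • v + √(1 - d y ^ 2) • w y
  have hva (x) : ⟪v, a x⟫_ℝ = c x := by
    simp [a, inner_add_right, real_inner_smul_right, hv, hvu]
  have hvb (y) : ⟪v, b y⟫_ℝ = d y := by
    simp [b, inner_add_right, real_inner_smul_right, hv, hvw]
  have haa (x) : ‖a x‖ = 1 := real_inner_self_eq_one_iff.1 <| by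
    rw [inner_smul_add_smul_of_inner_eq_zero hv (hvu x) (hvu x),
      real_inner_self_eq_one_iff.2 (hu x), mul_one, mul_self_sqrt (hc' x).le]
    ring
  have hbb (y) : ‖b y‖ = 1 := real_inner_self_eq_one_iff.1 <| by
    rw [inner_smul_add_smul_of_inner_eq_zero hv (hvw y) (hvw y),
      real_inner_self_eq_one_iff.2 (hw y), mul_one, mul_self_sqrt (hd' y).le]
    ring
  have hab (x y) : ⟪a x, b y⟫_ℝ = e x y := by
    rw [inner_smul_add_smul_of_inner_eq_zero hv (hvu x) (hvw y), huw, normalizedCovariance,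
      ← sqrt_mul (hc' x).le, mul_div_cancel₀ _ (sqrt_pos.2 (mul_pos (hc' x) (hd' y))).ne']
    ring
  let W : Fin 1 ⊕ (Fin 2 ⊕ κ) → V := Sum.elim (fun _ => v) (Sum.elim a b)
  refine ⟨⟪a 0, a 1⟫_ℝ, gram ℝ b, IsSymm.ext fun _ _ => real_inner_comm _ _,
    fun j => real_inner_self_eq_one_iff.2 (hbb j), ?_⟩
  suffices momentMatrix c d e ⟪a 0, a 1⟫_ℝ (gram ℝ b) = gram ℝ W from
    this ▸ posSemidef_gram ℝ W
  ext (i | x | y) (j | x' | y')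
  case inr.inl.inr.inl =>
    fin_cases x <;> fin_cases x' <;> simp [momentMatrix, W, haa, real_inner_comm]
  all_goals simp [momentMatrix, W, Fin.fin_one_eq_zero, hv, hva, hvb, hab, real_inner_comm]

theorem exists_posSemidef_momentMatrix_of_isSphericalTriangle {θ : ℝ}
    (hc : ∀ x, c x ∈ Set.Ioo (-1 : ℝ) 1) (hd : ∀ y, d y ∈ Set.Ioo (-1 : ℝ) 1)
    (hD : ∀ x y, |normalizedCovariance c d e x y| ≤ 1)
    (hθ : ∀ y, IsSphericalTriangle (arccos (normalizedCovariance c d e 0 y))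
      (arccos (normalizedCovariance c d e 1 y)) θ) :
    ∃ (t : ℝ) (Y : Matrix κ κ ℝ), Y.IsSymm ∧ (∀ j, Y j j = 1) ∧
      (momentMatrix c d e t Y).PosSemidef := by
  choose w hw using fun y => exists_unit_vector_inner_eq_cos (hθ y)
  have hcos (x y) :
      cos (arccos (normalizedCovariance c d e x y)) = normalizedCovariance c d e x y :=
    cos_arccos (abs_le.1 (hD x y)).1 (abs_le.1 (hD x y)).2
  refine exists_posSemidef_momentMatrix_of_unit_vectors
    (u := ![!₂[0, 1, 0, 0], !₂[0, cos θ, sin θ, 0]]) hc hd ?_ ?_ (fun y => (hw y).1) ?_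
    (fun y => (hw y).2.1) ?_
  · rw [← real_inner_self_eq_one_iff, real_inner_fin_four]
    simp
  · intro x
    rw [← real_inner_self_eq_one_iff, real_inner_fin_four]
    fin_cases x <;> simp [← sq]
  · intro x
    fin_cases x <;> simp [real_inner_fin_four]
  · intro x y
    fin_cases x
    · simpa [hcos] using (hw y).2.2.1
    · simpa [hcos] using (hw y).2.2.2

end MomentMatrix

theorem abs_arcsin_chsh_le_pi_iff (p q p' q' : ℝ) :
    (|arcsin p + arcsin q + arcsin p' - arcsin q'| ≤ π ∧
      |arcsin p + arcsin q - arcsin p' + arcsin q'| ≤ π ∧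
      |arcsin p - arcsin q + arcsin p' + arcsin q'| ≤ π ∧
      |-arcsin p + arcsin q + arcsin p' + arcsin q'| ≤ π) ↔
    (|arccos p - arccos q| ≤ min (arccos p' + arccos q') (2 * π - (arccos p' + arccos q')) ∧
      |arccos p' - arccos q'| ≤ min (arccos p + arccos q) (2 * π - (arccos p + arccos q))) := by
  simp only [arcsin_eq_pi_div_two_sub_arccos, abs_le, le_min_iff]
  constructor
  · rintro ⟨⟨h₁, h₂⟩, ⟨h₃, h₄⟩, ⟨h₅, h₆⟩, ⟨h₇, h₈⟩⟩
    refine ⟨⟨⟨?_, ?_⟩, ?_, ?_⟩, ⟨?_, ?_⟩, ?_, ?_⟩ <;> linarith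
  · rintro ⟨⟨⟨h₁, h₂⟩, h₃, h₄⟩, ⟨h₅, h₆⟩, h₇, h₈⟩
    refine ⟨⟨?_, ?_⟩, ⟨?_, ?_⟩, ⟨?_, ?_⟩, ⟨?_, ?_⟩⟩ <;> linarith

theorem stmt_11_general (n : ℕ) (c : Fin 2 → ℝ) (d : Fin n → ℝ)
    (hc : ∀ x, c x ∈ Set.Ioo (-1 : ℝ) 1) (hd : ∀ y, d y ∈ Set.Ioo (-1 : ℝ) 1)
    (e : Matrix (Fin 2) (Fin n) ℝ) (D : Fin 2 → Fin n → ℝ)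
    (hD : ∀ x y, D x y = (e x y - c x * d y) /
      Real.sqrt ((1 - c x ^ 2) * (1 - d y ^ 2)))
    (hDle : ∀ x y, |D x y| ≤ 1) :
    (∃ (t : ℝ) (Y : Matrix (Fin n) (Fin n) ℝ), Y.IsSymm ∧ (∀ j, Y j j = 1) ∧
      (Matrix.fromBlocks (1 : Matrix (Fin 1) (Fin 1) ℝ)
        (Matrix.of fun (_ : Fin 1) (j : Fin 2 ⊕ Fin n) => Sum.elim c d j)
        (Matrix.of fun (i : Fin 2 ⊕ Fin n) (_ : Fin 1) => Sum.elim c d i)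
        (Matrix.fromBlocks !![(1 : ℝ), t; t, 1] e eᵀ Y)).PosSemidef) ↔
    (∀ i j : Fin n,
      |Real.arcsin (D 0 i) + Real.arcsin (D 1 i) + Real.arcsin (D 0 j)
        - Real.arcsin (D 1 j)| ≤ Real.pi ∧
      |Real.arcsin (D 0 i) + Real.arcsin (D 1 i) - Real.arcsin (D 0 j)
        + Real.arcsin (D 1 j)| ≤ Real.pi ∧
      |Real.arcsin (D 0 i) - Real.arcsin (D 1 i) + Real.arcsin (D 0 j)
        + Real.arcsin (D 1 j)| ≤ Real.pi ∧
      |-Real.arcsin (D 0 i) + Real.arcsin (D 1 i) + Real.arcsin (D 0 j)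
        + Real.arcsin (D 1 j)| ≤ Real.pi) := by
  obtain rfl : D = normalizedCovariance c d e := funext₂ hD
  have hwindow : (∃ (t : ℝ) (Y : Matrix (Fin n) (Fin n) ℝ), Y.IsSymm ∧ (∀ j, Y j j = 1) ∧
      (momentMatrix c d e t Y).PosSemidef) ↔
      ∃ θ, ∀ y, IsSphericalTriangle (arccos (normalizedCovariance c d e 0 y))
        (arccos (normalizedCovariance c d e 1 y)) θ := by
    refine ⟨fun ⟨t, Y, _, hY, hM⟩ => ?_, fun ⟨θ, hθ⟩ =>
      exists_posSemidef_momentMatrix_of_isSphericalTriangle hc hd hDle hθ⟩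
    obtain ⟨u, w, hu, hw, huw⟩ := exists_unit_vectors_of_posSemidef_momentMatrix hc hd hY hM
    refine ⟨angle (u 0) (u 1), fun y => ?_⟩
    simpa [angle_eq_arccos_of_norm_eq_one, hu, hw, huw] using
      isSphericalTriangle_angle (u 0) (u 1) (w y)
  refine hwindow.trans ?_
  simp only [IsSphericalTriangle, Finite.exists_forall_le_and_le_iff, abs_arcsin_chsh_le_pi_iff]
  exact ⟨fun h i j => ⟨h i j, h j i⟩, fun h i j => (h i j).1⟩

/-- A certificate of order 1 (membership in `Q¹`) exists for correlations
`(c, d, e)` in the `2n22` scenario iff the four arcsine (CHSH-type)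
inequalities hold for the normalized covariances `D`. -/
theorem stmt_11 (n : ℕ) (hn : 2 ≤ n) (c : Fin 2 → ℝ) (d : Fin n → ℝ)
    (hc : ∀ x, c x ∈ Set.Ioo (-1 : ℝ) 1) (hd : ∀ y, d y ∈ Set.Ioo (-1 : ℝ) 1)
    (e : Matrix (Fin 2) (Fin n) ℝ) (D : Fin 2 → Fin n → ℝ)
    (hD : ∀ x y, D x y = (e x y - c x * d y) /
      Real.sqrt ((1 - c x ^ 2) * (1 - d y ^ 2)))
    (hDle : ∀ x y, |D x y| ≤ 1) :
    (∃ (t : ℝ) (Y : Matrix (Fin n) (Fin n) ℝ), Y.IsSymm ∧ (∀ j, Y j j = 1) ∧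
      (Matrix.fromBlocks (1 : Matrix (Fin 1) (Fin 1) ℝ)
        (Matrix.of fun (_ : Fin 1) (j : Fin 2 ⊕ Fin n) => Sum.elim c d j)
        (Matrix.of fun (i : Fin 2 ⊕ Fin n) (_ : Fin 1) => Sum.elim c d i)
        (Matrix.fromBlocks !![(1 : ℝ), t; t, 1] e eᵀ Y)).PosSemidef) ↔
    (∀ i j : Fin n,
      |Real.arcsin (D 0 i) + Real.arcsin (D 1 i) + Real.arcsin (D 0 j)
        - Real.arcsin (D 1 j)| ≤ Real.pi ∧
      |Real.arcsin (D 0 i) + Real.arcsin (D 1 i) - Real.arcsin (D 0 j)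
        + Real.arcsin (D 1 j)| ≤ Real.pi ∧
      |Real.arcsin (D 0 i) - Real.arcsin (D 1 i) + Real.arcsin (D 0 j)
        + Real.arcsin (D 1 j)| ≤ Real.pi ∧
      |-Real.arcsin (D 0 i) + Real.arcsin (D 1 i) + Real.arcsin (D 0 j)
        + Real.arcsin (D 1 j)| ≤ Real.pi) :=
  stmt_11_general n c d hc hd e D hD hDle
end

section
/- Let n ≥ 2, let c₁, c₂ ∈ (−1, 1), d₁, …, dₙ ∈ (−1, 1), and e_{xy} ∈ ℝ for x ∈ {1, 2}, y ∈ {1, …, n}, and define D_{xy} = (e_{xy} − c_x·d_y)/√((1 − c_x²)(1 − d_y²)). Suppose there exist a real number t and a real symmetric n×n matrix Y with Y_{jj} = 1 such that the (n+3)×(n+3) real symmetric matrix Γ¹ = [[1, cᵀ, dᵀ],[c, X, E],[d, Eᵀ, Y]], where c = (c₁, c₂)ᵀ, d = (d₁, …, dₙ)ᵀ, X = [[1, t],[t, 1]], and E_{xy} = e_{xy}, is positive semidefinite. Then for all i, j ∈ {1, …, n}: |arcsin(D_{1i}) + arcsin(D_{2i}) + arcsin(D_{1j}) − arcsin(D_{2j})|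 ≤ π. -/
open Matrix


private lemma psdDetNonneg {m : Type*} [Fintype m] [DecidableEq m] {M : Matrix m m ℝ}
    (h : M.PosSemidef) : 0 ≤ M.det := by
  rw [h.1.det_eq_prod_eigenvalues]
  exact Finset.prod_nonneg fun i _ => h.eigenvalues_nonneg i

private lemma arccos_tri {a b c : ℝ} (ha : a ^ 2 ≤ 1) (hb : b ^ 2 ≤ 1) (hc : c ^ 2 ≤ 1)
    (hdet : 0 ≤ 1 - a ^ 2 - b ^ 2 - c ^ 2 + 2 * a * b * c) :
    Real.arccos c ≤ Real.arccos a + Real.arccos b := by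
  have ha1 : -1 ≤ a := by nlinarith
  have ha2 : a ≤ 1 := by nlinarith
  have hb1 : -1 ≤ b := by nlinarith
  have hb2 : b ≤ 1 := by nlinarith
  by_cases hπ : Real.pi ≤ Real.arccos a + Real.arccos b
  · exact (Real.arccos_le_pi c).trans hπ
  push_neg at hπ
  set α := Real.arccos a with hα
  set β := Real.arccos b with hβ
  have hs1 : Real.sin α = Real.sqrt (1 - a ^ 2) := Real.sin_arccos a
  have hs2 : Real.sin β = Real.sqrt (1 - b ^ 2) := Real.sin_arccos b
  have hca : Real.cos α = a := Real.cos_arccos ha1 ha2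
  have hcb : Real.cos β = b := Real.cos_arccos hb1 hb2
  have h1 : Real.sqrt (1 - a ^ 2) ^ 2 = 1 - a ^ 2 := Real.sq_sqrt (by linarith)
  have h2 : Real.sqrt (1 - b ^ 2) ^ 2 = 1 - b ^ 2 := Real.sq_sqrt (by linarith)
  have hst : 0 ≤ Real.sqrt (1 - a ^ 2) * Real.sqrt (1 - b ^ 2) := by positivity
  have hcab : Real.cos (α + β) = a * b - Real.sqrt (1 - a ^ 2) * Real.sqrt (1 - b ^ 2) := by
    rw [Real.cos_add, hca, hcb, hs1, hs2]
  have hprod : (c - Real.cos (α + β)) *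
      ((a * b + Real.sqrt (1 - a ^ 2) * Real.sqrt (1 - b ^ 2)) - c)
      = 1 - a ^ 2 - b ^ 2 - c ^ 2 + 2 * a * b * c := by
    rw [hcab]
    linear_combination Real.sqrt (1 - b ^ 2) ^ 2 * h1 + (1 - a ^ 2) * h2
  have hkey : Real.cos (α + β) ≤ c := by nlinarith [hprod, hdet, hst, hcab]
  have h0 : 0 ≤ α + β := add_nonneg (Real.arccos_nonneg a) (Real.arccos_nonneg b)
  have hmono := Real.monotone_arcsin hkey
  have e1 : Real.arccos c = Real.pi / 2 - Real.arcsin c := Real.arccos_eq_pi_div_two_sub_arcsin c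
  have e2 : Real.arccos (Real.cos (α + β)) = α + β := Real.arccos_cos h0 hπ.le
  have e3 : Real.arccos (Real.cos (α + β)) = Real.pi / 2 - Real.arcsin (Real.cos (α + β)) :=
    Real.arccos_eq_pi_div_two_sub_arcsin _
  linarith

private lemma gram_tri {m : Type*} [Fintype m] [DecidableEq m] {N : Matrix m m ℝ}
    (hN : N.PosSemidef) (hdiag : ∀ p, N p p = 1) (p q r : m) :
    Real.arccos (N p r) ≤ Real.arccos (N p q) + Real.arccos (N q r) := by
  have hsym : ∀ u v : m, N u v = N v u := fun u v => by simpa using hN.1.apply v u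
  have h2 : ∀ u v : m, (N u v) ^ 2 ≤ 1 := by
    intro u v
    have hdet := psdDetNonneg (hN.submatrix ![u, v])
    rw [Matrix.det_fin_two] at hdet
    simp only [Matrix.submatrix_apply, Matrix.cons_val_zero, Matrix.cons_val_one,
      Matrix.head_cons, hdiag] at hdet
    rw [hsym v u] at hdet
    nlinarith [hdet]
  have hdet := psdDetNonneg (hN.submatrix ![p, q, r])
  rw [Matrix.det_fin_three] at hdet
  simp only [Matrix.submatrix_apply, Matrix.cons_val_zero, Matrix.cons_val_one,
    Matrix.head_cons, Matrix.cons_val_two, Matrix.tail_cons, hdiag] at hdet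
  rw [hsym q p, hsym r q, hsym r p] at hdet
  exact arccos_tri (h2 p q) (h2 q r) (h2 p r) (by nlinarith [hdet])

/-- If a certificate of order 1 (membership in `Q¹`) exists for correlations
`(c, d, e)` in the `2n22` scenario, then the microscopic correlations satisfy
the quantum Bell inequality obtained from CHSH by replacing each correlator
with `(2/π)·arcsin` of the normalized covariance `D`. -/
theorem stmt_12 (n : ℕ) (hn : 2 ≤ n) (c : Fin 2 → ℝ) (d : Fin n → ℝ)
    (hc : ∀ x, c x ∈ Set.Ioo (-1 : ℝ) 1) (hd : ∀ y, d y ∈ Set.Ioo (-1 : ℝ) 1)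
    (e : Matrix (Fin 2) (Fin n) ℝ) (D : Fin 2 → Fin n → ℝ)
    (hD : ∀ x y, D x y = (e x y - c x * d y) /
      Real.sqrt ((1 - c x ^ 2) * (1 - d y ^ 2)))
    (hcert : ∃ (t : ℝ) (Y : Matrix (Fin n) (Fin n) ℝ), Y.IsSymm ∧
      (∀ j, Y j j = 1) ∧
      (Matrix.fromBlocks (1 : Matrix (Fin 1) (Fin 1) ℝ)
        (Matrix.of fun (_ : Fin 1) (j : Fin 2 ⊕ Fin n) => Sum.elim c d j)
        (Matrix.of fun (i : Fin 2 ⊕ Fin n) (_ : Fin 1) => Sum.elim c d i)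
        (Matrix.fromBlocks !![(1 : ℝ), t; t, 1] e eᵀ Y)).PosSemidef) :
    ∀ i j : Fin n,
      |Real.arcsin (D 0 i) + Real.arcsin (D 1 i) + Real.arcsin (D 0 j)
        - Real.arcsin (D 1 j)| ≤ Real.pi := by
  obtain ⟨t, Y, hYs, hYd, hΓ⟩ := hcert
  set mv : Fin 2 ⊕ Fin n → ℝ := Sum.elim c d with hmv
  set G : Matrix (Fin 2 ⊕ Fin n) (Fin 2 ⊕ Fin n) ℝ :=
    Matrix.fromBlocks !![(1 : ℝ), t; t, 1] e eᵀ Y with hG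
  set B : Matrix (Fin 1) (Fin 2 ⊕ Fin n) ℝ :=
    Matrix.of fun (_ : Fin 1) (j : Fin 2 ⊕ Fin n) => mv j with hB
  have hBc : (Matrix.of fun (i : Fin 2 ⊕ Fin n) (_ : Fin 1) => mv i) = Bᴴ := by
    ext i k; simp [hB, Matrix.conjTranspose_apply]
  rw [hBc] at hΓ
  have hA : (1 : Matrix (Fin 1) (Fin 1) ℝ).PosDef := Matrix.PosDef.one
  letI : Invertible (1 : Matrix (Fin 1) (Fin 1) ℝ) := invertibleOne
  have hS : (G - Bᴴ * (1 : Matrix (Fin 1) (Fin 1) ℝ)⁻¹ * B).PosSemidef :=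
    (Matrix.PosDef.fromBlocks₁₁ B G hA).mp hΓ
  rw [inv_one, Matrix.mul_one] at hS
  have hpos : ∀ p, 0 < 1 - mv p ^ 2 := by
    rintro (x | y)
    · have := hc x; simp only [Set.mem_Ioo] at this
      simp only [hmv, Sum.elim_inl]; nlinarith [this.1, this.2]
    · have := hd y; simp only [Set.mem_Ioo] at this
      simp only [hmv, Sum.elim_inr]; nlinarith [this.1, this.2]
  set w : Fin 2 ⊕ Fin n → ℝ := fun p => (Real.sqrt (1 - mv p ^ 2))⁻¹ with hw
  set N : Matrix (Fin 2 ⊕ Fin n) (Fin 2 ⊕ Fin n) ℝ :=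
    Matrix.diagonal w * (G - Bᴴ * B) * Matrix.diagonal w with hN
  have hNpsd : N.PosSemidef := by
    have := hS.mul_mul_conjTranspose_same (Matrix.diagonal w)
    simpa [hN, Matrix.diagonal_conjTranspose, Matrix.mul_assoc] using this
  have hNentry : ∀ p q, N p q = w p * (G p q - mv p * mv q) * w q := by
    intro p q
    rw [hN, Matrix.mul_diagonal, Matrix.diagonal_mul, Matrix.sub_apply]
    have : (Bᴴ * B) p q = mv p * mv q := by
      simp [Matrix.mul_apply, hB, Matrix.conjTranspose_apply, Fin.sum_univ_one]
    rw [this]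
  have hNdiag : ∀ p, N p p = 1 := by
    intro p
    have h1 : G p p = 1 := by
      rcases p with x | y
      · fin_cases x <;> simp [hG]
      · simp [hG, hYd y]
    rw [hNentry, h1]
    have hs := Real.sqrt_pos.mpr (hpos p)
    have hms : (1 : ℝ) - mv p * mv p
        = Real.sqrt (1 - mv p ^ 2) * Real.sqrt (1 - mv p ^ 2) := by
      rw [Real.mul_self_sqrt (hpos p).le]; ring
    simp only [hw]
    rw [hms]
    field_simp
  have hNab : ∀ (x : Fin 2) (y : Fin n), N (Sum.inl x) (Sum.inr y) = D x y := by
    intro x y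
    rw [hNentry, hD]
    have hGe : G (Sum.inl x) (Sum.inr y) = e x y := by simp [hG]
    rw [hGe]
    have h1 : (0:ℝ) ≤ 1 - c x ^ 2 := (hpos (Sum.inl x)).le
    rw [Real.sqrt_mul h1]
    simp only [hw, hmv, Sum.elim_inl, Sum.elim_inr]
    rw [div_eq_mul_inv, mul_inv]
    ring
  -- sign-flipped matrix
  set s : Fin 2 ⊕ Fin n → ℝ := Sum.elim (fun _ => (-1 : ℝ)) (fun _ => 1) with hsv
  set N' : Matrix (Fin 2 ⊕ Fin n) (Fin 2 ⊕ Fin n) ℝ :=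
    Matrix.diagonal s * N * Matrix.diagonal s with hN'
  have hN'psd : N'.PosSemidef := by
    have := hNpsd.mul_mul_conjTranspose_same (Matrix.diagonal s)
    simpa [hN', Matrix.diagonal_conjTranspose, Matrix.mul_assoc] using this
  have hN'entry : ∀ p q, N' p q = s p * N p q * s q := by
    intro p q; rw [hN', Matrix.mul_diagonal, Matrix.diagonal_mul]
  have hN'diag : ∀ p, N' p p = 1 := by
    rintro (x | y) <;> rw [hN'entry, hNdiag] <;> simp [hsv]
  intro i j
  have hsym : ∀ u v, N u v = N v u := fun u v => by simpa using hNpsd.1.apply v u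
  have T1 := gram_tri hNpsd hNdiag (Sum.inl 1) (Sum.inr i) (Sum.inr j)
  have T2 := gram_tri hNpsd hNdiag (Sum.inr i) (Sum.inl 0) (Sum.inr j)
  have T3 := gram_tri hN'psd hN'diag (Sum.inl 1) (Sum.inr i) (Sum.inr j)
  have T4 := gram_tri hN'psd hN'diag (Sum.inr i) (Sum.inl 0) (Sum.inr j)
  rw [hNab 1 j, hNab 1 i] at T1
  rw [hsym (Sum.inr i) (Sum.inl 0), hNab 0 i, hNab 0 j] at T2
  rw [hN'entry, hN'entry, hN'entry] at T3
  rw [hN'entry, hN'entry, hN'entry] at T4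
  simp only [hsv, Sum.elim_inl, Sum.elim_inr, one_mul, mul_one, neg_one_mul, mul_neg_one, neg_mul, neg_neg] at T3 T4
  rw [hNab 1 j, hNab 1 i] at T3
  rw [hsym (Sum.inr i) (Sum.inl 0), hNab 0 i, hNab 0 j] at T4
  rw [Real.arccos_neg, Real.arccos_neg] at T3
  rw [Real.arccos_neg, Real.arccos_neg] at T4
  have hconv : ∀ x : ℝ, Real.arcsin x = Real.pi / 2 - Real.arccos x := fun x => by
    rw [Real.arccos_eq_pi_div_two_sub_arcsin]; ring
  rw [hconv (D 0 i), hconv (D 1 i), hconv (D 0 j), hconv (D 1 j), abs_le]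
  constructor <;> linarith [T1, T2, T3, T4]
end
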